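/- arXiv:2111.12399 — 8 statements merged into one kernel-verified Lean document; each statement's English description precedes it below -/
import Mathlib

section
/- Let Y ∈ ℝ^{n×m}, D ∈ ℝ^{n×d}, B ∈ ℝ^{m×r}, and k < n. Suppose X* is the unique minimizer of max_i ‖X_i‖_0 over all X ∈ ℝ^{d×r} satisfying ‖Y − D X Bᵀ‖_F² ≤ ε₁ (for some ε₁ ≥ 0). Then, setting k = max_i ‖X*_i‖_0, X* is also the unique minimizer of ‖Y − D X Bᵀ‖_F² over all X whose columns each have at most k nonzero entries. -/
open Matrix Finset

noncomputable def frob2 {n m : ℕ} (M : Matrix (Fin n) (Fin m) ℝ) : ℝ := ∑ i, ∑ j, (M i j)^2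

noncomputable def l0 {d : ℕ} (x : Fin d → ℝ) : ℕ := (Finset.univ.filter fun j => x j ≠ 0).card

def col {d r : ℕ} (X : Matrix (Fin d) (Fin r) ℝ) (i : Fin r) : Fin d → ℝ := fun j => X j i

/-- a unique minimizer of the max column sparsity under a residual
constraint is also the unique minimizer of the residual under columnwise
`k`-sparsity, with `k = max_i ‖X*_i‖₀`. -/
theorem stmt0 {n m d r : ℕ} (Y : Matrix (Fin n) (Fin m) ℝ)
    (D : Matrix (Fin n) (Fin d) ℝ) (B : Matrix (Fin m) (Fin r) ℝ)
    (ε₁ : ℝ) (hε : 0 ≤ ε₁) (Xs : Matrix (Fin d) (Fin r) ℝ)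
    (hfeas : frob2 (Y - D * Xs * Bᵀ) ≤ ε₁)
    (huniq : ∀ Z : Matrix (Fin d) (Fin r) ℝ, frob2 (Y - D * Z * Bᵀ) ≤ ε₁ → Z ≠ Xs →
      (Finset.univ.sup fun i => l0 (_root_.col Xs i)) < Finset.univ.sup fun i => l0 (_root_.col Z i)) :
    ∀ Z : Matrix (Fin d) (Fin r) ℝ,
      (∀ i, l0 (_root_.col Z i) ≤ Finset.univ.sup fun i => l0 (_root_.col Xs i)) → Z ≠ Xs →
      frob2 (Y - D * Xs * Bᵀ) < frob2 (Y - D * Z * Bᵀ) := by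
  intro Z hk hne
  by_contra h
  push_neg at h
  have hZfeas : frob2 (Y - D * Z * Bᵀ) ≤ ε₁ := le_trans h hfeas
  have := huniq Z hZfeas hne
  have hle : (Finset.univ.sup fun i => l0 (_root_.col Z i)) ≤
      Finset.univ.sup fun i => l0 (_root_.col Xs i) := Finset.sup_le fun i _ => hk i
  omega
end

section
/- Let D ∈ ℝ^{n×d} with spark(D) > 2k, and B ∈ ℝ^{m×r} with full column rank. If X and X' are matrices whose columns are each at most k-sparse and D X Bᵀ = D X' Bᵀ, then X = X'. -/
open Matrix Finset

/-- `spark D` is the smallest number of columns of `D` that are linearly dependent. -/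
noncomputable def spark {n d : ℕ} (D : Matrix (Fin n) (Fin d) ℝ) : ℕ :=
  sInf {c : ℕ | ∃ S : Finset (Fin d), S.card = c ∧
    ¬ LinearIndependent ℝ (fun i : S => Dᵀ (i : Fin d))}

lemma spark_le_of_null {n d : ℕ} (D : Matrix (Fin n) (Fin d) ℝ) (z : Fin d → ℝ)
    (hz : z ≠ 0) (hDz : D.mulVec z = 0) :
    spark D ≤ (Finset.univ.filter fun j => z j ≠ 0).card := by
  apply Nat.sInf_le
  refine ⟨Finset.univ.filter fun j => z j ≠ 0, rfl, ?_⟩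
  rw [Fintype.not_linearIndependent_iff]
  refine ⟨fun i => z i, ?_, ?_⟩
  · funext j
    have : ∑ i ∈ (Finset.univ.filter fun j => z j ≠ 0), z i * Dᵀ i j = 0 := by
      rw [Finset.sum_filter_of_ne (fun i _ h => by
        intro hzi; exact h (by rw [hzi, zero_mul]))]
      have := congrFun hDz j
      simpa [Matrix.mulVec, dotProduct, mul_comm] using this
    calc (∑ i : (Finset.univ.filter fun j => z j ≠ 0 : Finset (Fin d)),
            z i • Dᵀ (i : Fin d)) j
        = ∑ i ∈ (Finset.univ.filter fun j => z j ≠ 0), z i * Dᵀ i j := by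
          rw [Finset.sum_apply]
          exact Finset.sum_coe_sort _ (fun i => z i * Dᵀ i j)
      _ = 0 := this
  · obtain ⟨j, hj⟩ := Function.ne_iff.mp hz
    exact ⟨⟨j, by simpa using hj⟩, hj⟩

/-- if `spark(D) > 2k` and `B` has full column rank, then the
columnwise `k`-sparse representation is unique. -/
theorem stmt1 {n m d r k : ℕ} (D : Matrix (Fin n) (Fin d) ℝ)
    (B : Matrix (Fin m) (Fin r) ℝ)
    (hspark : 2 * k < spark D) (hB : B.rank = r)
    (X X' : Matrix (Fin d) (Fin r) ℝ)
    (hX : ∀ i, l0 (_root_.col X i) ≤ k) (hX' : ∀ i, l0 (_root_.col X' i) ≤ k)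
    (heq : D * X * Bᵀ = D * X' * Bᵀ) : X = X' := by
  -- B.mulVec is injective
  have hker : LinearMap.ker B.mulVecLin = ⊥ := by
    have h1 := LinearMap.finrank_range_add_finrank_ker B.mulVecLin
    have hdom : Module.finrank ℝ (Fin r → ℝ) = r := by simp
    rw [hdom] at h1
    have hrange : Module.finrank ℝ (LinearMap.range B.mulVecLin) = r := hB
    have : Module.finrank ℝ (LinearMap.ker B.mulVecLin) = 0 := by omega
    exact Submodule.finrank_eq_zero.mp this
  have hBinj : Function.Injective B.mulVec := by
    have := LinearMap.ker_eq_bot.mp hker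
    exact this
  -- step 1: D*X = D*X'
  have hDX : D * X = D * X' := by
    ext j t
    have hrow : B.mulVec ((D * X) j) = B.mulVec ((D * X') j) := by
      funext i
      have := congrFun (congrFun heq j) i
      simpa [Matrix.mul_apply, Matrix.mulVec, dotProduct, Matrix.transpose_apply,
        mul_comm] using this
    exact congrFun (hBinj hrow) t
  -- step 2: columns
  ext j i
  by_contra hne
  set z : Fin d → ℝ := fun t => X t i - X' t i with hzdef
  have hz : z ≠ 0 := by
    intro h
    exact hne (by have := congrFun h j; simpa [hzdef, sub_eq_zero] using this)
  have hDz : D.mulVec z = 0 := by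
    funext s
    have := congrFun (congrFun hDX s) i
    simp only [Matrix.mul_apply] at this
    simp [Matrix.mulVec, dotProduct, hzdef, mul_sub, Finset.sum_sub_distrib, this]
  have hsub : (Finset.univ.filter fun t => z t ≠ 0) ⊆
      (Finset.univ.filter fun t => _root_.col X i t ≠ 0) ∪
      (Finset.univ.filter fun t => _root_.col X' i t ≠ 0) := by
    intro t ht
    simp only [Finset.mem_filter, Finset.mem_univ, true_and, Finset.mem_union] at ht ⊢
    by_contra hc
    push_neg at hc
    simp only [_root_.col, not_not] at hc
    exact ht (by simp [hzdef, hc.1, hc.2])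
  have hcard : (Finset.univ.filter fun t => z t ≠ 0).card ≤ 2 * k := by
    calc (Finset.univ.filter fun t => z t ≠ 0).card
        ≤ _ := Finset.card_le_card hsub
      _ ≤ _ + _ := Finset.card_union_le _ _
      _ ≤ 2 * k := by have := hX i; have := hX' i; unfold l0 at *; omega
  have := spark_le_of_null D z hz hDz
  omega
end

section
/- Let D ∈ ℝ^{n×d} with n ≥ d be a matrix with orthonormal columns (Dᵀ D = I_d), b ∈ ℝ^m a nonzero vector, Y ∈ ℝ^{n×m}, and k ≤ d. Then a minimizer of ‖Y − D x bᵀ‖_F² over k-sparse vectors x ∈ ℝ^d is given by hard-thresholding: x* = HT_k((1/‖b‖₂²) Dᵀ Y b), where HT_k keeps the k entries of largest absolute value and sets the others to zero. -/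
open Matrix Finset

lemma sum_mono_card {d : ℕ} (f : Fin d → ℝ) (hf : ∀ a, 0 ≤ f a)
    (A B : Finset (Fin d)) (hc : B.card ≤ A.card)
    (h : ∀ a ∈ A, ∀ c ∈ B, f c ≤ f a) :
    ∑ c ∈ B, f c ≤ ∑ a ∈ A, f a := by
  rcases A.eq_empty_or_nonempty with hA | hA
  · have hc0 : B.card = 0 := Nat.le_zero.mp (by simpa [hA] using hc)
    have hB : B = ∅ := Finset.card_eq_zero.mp hc0
    simp [hA, hB]
  · obtain ⟨a0, ha0, hmin⟩ := A.exists_min_image f hA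
    calc ∑ c ∈ B, f c ≤ B.card • f a0 :=
          Finset.sum_le_card_nsmul _ _ _ (fun c hc' => h a0 ha0 c hc')
      _ ≤ A.card • f a0 := nsmul_le_nsmul_left (hf a0) hc
      _ ≤ ∑ a ∈ A, f a := Finset.card_nsmul_le_sum _ _ _ (fun a ha => hmin a ha)

/-- with a left-orthogonal dictionary, the rank-one MSC problem is
solved by hard-thresholding `(1/‖b‖²) Dᵀ Y b`. `S` is a set of `k` indices
carrying the largest absolute values of `v`, and `HT_k(v)` keeps `v` on `S`. -/
theorem stmt2 {n m d : ℕ} (hnd : d ≤ n) (D : Matrix (Fin n) (Fin d) ℝ)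
    (hD : Dᵀ * D = 1) (b : Fin m → ℝ) (hb : b ≠ 0)
    (Y : Matrix (Fin n) (Fin m) ℝ) (k : ℕ) (hk : k ≤ d)
    (v : Fin d → ℝ)
    (hv : v = (1 / ∑ t, (b t)^2) • (Dᵀ * Y).mulVec b)
    (S : Finset (Fin d)) (hcard : S.card = k)
    (hS : ∀ i ∈ S, ∀ j ∉ S, |v j| ≤ |v i|)
    (xs : Fin d → ℝ) (hxs : xs = fun i => if i ∈ S then v i else 0) :
    l0 xs ≤ k ∧
      ∀ x : Fin d → ℝ, l0 x ≤ k →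
        frob2 (Y - Matrix.vecMulVec (D.mulVec xs) b) ≤
          frob2 (Y - Matrix.vecMulVec (D.mulVec x) b) := by
  have hBpos : 0 < ∑ t, (b t)^2 := by
    obtain ⟨t, ht⟩ : ∃ t, b t ≠ 0 := by
      by_contra h; push_neg at h; exact hb (funext h)
    exact lt_of_lt_of_le (by positivity)
      (Finset.single_le_sum (fun i _ => sq_nonneg (b i)) (Finset.mem_univ t))
  -- row-wise expansion of the Frobenius norm
  have expand : ∀ w : Fin n → ℝ, frob2 (Y - Matrix.vecMulVec w b)
      = frob2 Y - 2 * ∑ i, w i * (Y.mulVec b) i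
        + (∑ i, (w i)^2) * (∑ t, (b t)^2) := by
    intro w
    have hrow : ∀ i, ∑ j, ((Y - Matrix.vecMulVec w b) i j)^2
        = (∑ j, (Y i j)^2) - 2 * (w i * (Y.mulVec b) i) + (w i)^2 * (∑ t, (b t)^2) := by
      intro i
      simp only [Matrix.sub_apply, Matrix.vecMulVec_apply, Matrix.mulVec, dotProduct]
      have h : ∀ j, (Y i j - w i * b j)^2
          = (Y i j)^2 - 2*(w i*(Y i j * b j)) + (w i)^2*(b j)^2 := fun j => by ring
      simp only [h, Finset.sum_add_distrib, Finset.sum_sub_distrib, ← Finset.mul_sum]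
    unfold frob2
    simp only [hrow]
    rw [Finset.sum_add_distrib, Finset.sum_sub_distrib, ← Finset.mul_sum, ← Finset.sum_mul]
  -- the correlation term
  have hDYb : ∀ a, ∑ i, D i a * (Y.mulVec b) i = (∑ t, (b t)^2) * v a := by
    intro a
    have h1 : ((Dᵀ * Y).mulVec b) a = ∑ i, D i a * (Y.mulVec b) i := by
      simp only [Matrix.mulVec, dotProduct, Matrix.mul_apply, Matrix.transpose_apply,
        Finset.sum_mul]
      rw [Finset.sum_comm]
      refine Finset.sum_congr rfl fun i _ => ?_
      rw [Finset.mul_sum]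
      exact Finset.sum_congr rfl fun j _ => by ring
    have h2 : v a = (1 / (∑ t, (b t)^2)) * ((Dᵀ * Y).mulVec b) a := by
      rw [hv]; simp
    rw [← h1, h2]
    field_simp
  have hcorr : ∀ x : Fin d → ℝ,
      ∑ i, (D.mulVec x) i * (Y.mulVec b) i = (∑ t, (b t)^2) * ∑ a, x a * v a := by
    intro x
    calc ∑ i, (D.mulVec x) i * (Y.mulVec b) i
        = ∑ i, ∑ a, x a * (D i a * (Y.mulVec b) i) := by
          refine Finset.sum_congr rfl fun i _ => ?_
          simp only [Matrix.mulVec, dotProduct, Finset.sum_mul]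
          exact Finset.sum_congr rfl fun a _ => by ring
      _ = ∑ a, x a * ∑ i, D i a * (Y.mulVec b) i := by
          rw [Finset.sum_comm]
          exact Finset.sum_congr rfl fun a _ => by rw [Finset.mul_sum]
      _ = (∑ t, (b t)^2) * ∑ a, x a * v a := by
          simp only [hDYb]
          rw [Finset.mul_sum]
          exact Finset.sum_congr rfl fun a _ => by ring
  -- orthonormality
  have hDD : ∀ a c, ∑ i, D i a * D i c = if a = c then 1 else 0 := by
    intro a c
    have := congrFun (congrFun hD a) c
    simpa [Matrix.mul_apply, Matrix.transpose_apply, Matrix.one_apply] using this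
  have hnorm : ∀ x : Fin d → ℝ, ∑ i, ((D.mulVec x) i)^2 = ∑ a, (x a)^2 := by
    intro x
    calc ∑ i, ((D.mulVec x) i)^2
        = ∑ i, ∑ a, ∑ c, (x a * x c) * (D i a * D i c) := by
          refine Finset.sum_congr rfl fun i _ => ?_
          simp only [Matrix.mulVec, dotProduct]
          rw [sq, Finset.sum_mul_sum]
          exact Finset.sum_congr rfl fun a _ => Finset.sum_congr rfl fun c _ => by ring
      _ = ∑ a, ∑ c, (x a * x c) * ∑ i, D i a * D i c := by
          rw [Finset.sum_comm]
          refine Finset.sum_congr rfl fun a _ => ?_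
          rw [Finset.sum_comm]
          exact Finset.sum_congr rfl fun c _ => by rw [Finset.mul_sum]
      _ = ∑ a, (x a)^2 := by
          simp only [hDD, mul_ite, mul_one, mul_zero, Finset.sum_ite_eq, Finset.mem_univ,
            if_true]
          exact Finset.sum_congr rfl fun a _ => (sq (x a)).symm ▸ by ring
  -- the key identity
  have key : ∀ x : Fin d → ℝ, frob2 (Y - Matrix.vecMulVec (D.mulVec x) b)
      = frob2 Y - (∑ t, (b t)^2) * ∑ a, (v a)^2
        + (∑ t, (b t)^2) * ∑ a, (x a - v a)^2 := by
    intro x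
    rw [expand (D.mulVec x), hcorr x, hnorm x]
    have hsq : ∑ a, (x a - v a)^2
        = ∑ a, (x a)^2 - 2 * ∑ a, x a * v a + ∑ a, (v a)^2 := by
      rw [Finset.mul_sum, ← Finset.sum_sub_distrib, ← Finset.sum_add_distrib]
      exact Finset.sum_congr rfl fun a _ => by ring
    rw [hsq]; ring
  constructor
  · have hsub : (Finset.univ.filter fun j => xs j ≠ 0) ⊆ S := by
      intro j hj
      rw [Finset.mem_filter] at hj
      by_contra h
      exact hj.2 (by rw [hxs]; simp [h])
    calc l0 xs ≤ S.card := Finset.card_le_card hsub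
      _ = k := hcard
  · intro x hx
    set T : Finset (Fin d) := Finset.univ.filter fun j => x j ≠ 0 with hT
    have hTk : T.card ≤ k := hx
    -- left side equals sum over Sᶜ of v²
    have hls : ∑ a, (xs a - v a)^2 = ∑ a ∈ Sᶜ, (v a)^2 := by
      rw [← Finset.sum_add_sum_compl S]
      have e1 : ∑ a ∈ S, (xs a - v a)^2 = 0 :=
        Finset.sum_eq_zero fun a ha => by simp [hxs, ha]
      have e2 : ∑ a ∈ Sᶜ, (xs a - v a)^2 = ∑ a ∈ Sᶜ, (v a)^2 :=
        Finset.sum_congr rfl fun a ha => by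
          have : a ∉ S := Finset.mem_compl.mp ha
          simp [hxs, this]
      rw [e1, e2, zero_add]
    -- right side is at least sum over Tᶜ of v²
    have hrs : ∑ a ∈ Tᶜ, (v a)^2 ≤ ∑ a, (x a - v a)^2 := by
      have e : ∑ a ∈ Tᶜ, (v a)^2 = ∑ a ∈ Tᶜ, (x a - v a)^2 :=
        Finset.sum_congr rfl fun a ha => by
          have hxa : x a = 0 := by
            have := Finset.mem_compl.mp ha
            rw [hT] at this
            simpa using this
          rw [hxa]; ring
      rw [e]
      exact Finset.sum_le_sum_of_subset_of_nonneg (Finset.subset_univ _)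
        (fun a _ _ => sq_nonneg _)
    -- middle inequality
    have hmid : ∑ a ∈ Sᶜ, (v a)^2 ≤ ∑ a ∈ Tᶜ, (v a)^2 := by
      rw [← Finset.sum_filter_add_sum_filter_not Sᶜ (· ∈ T),
          ← Finset.sum_filter_add_sum_filter_not Tᶜ (· ∈ S)]
      have hcommon : Sᶜ.filter (fun a => ¬ a ∈ T) = Tᶜ.filter (fun a => ¬ a ∈ S) := by
        ext a; simp [Finset.mem_compl, and_comm]
      have hTS : Sᶜ.filter (fun a => a ∈ T) = T \ S := by
        ext a; simp [Finset.mem_compl, Finset.mem_sdiff, and_comm]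
      have hST : Tᶜ.filter (fun a => a ∈ S) = S \ T := by
        ext a; simp [Finset.mem_compl, Finset.mem_sdiff, and_comm]
      rw [hcommon, hTS, hST]
      have hcardle : (T \ S).card ≤ (S \ T).card := by
        have c1 := Finset.card_sdiff_add_card_inter T S
        have c2 := Finset.card_sdiff_add_card_inter S T
        have c3 : (T ∩ S).card = (S ∩ T).card := by rw [Finset.inter_comm]
        omega
      have hle : ∑ a ∈ T \ S, (v a)^2 ≤ ∑ a ∈ S \ T, (v a)^2 := by
        refine sum_mono_card _ (fun a => sq_nonneg _) _ _ hcardle ?_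
        intro a ha c hc
        rw [Finset.mem_sdiff] at ha hc
        have habs := hS a ha.1 c hc.2
        calc (v c)^2 = |v c|^2 := (sq_abs _).symm
          _ ≤ |v a|^2 := by
              exact pow_le_pow_left₀ (abs_nonneg _) habs 2
          _ = (v a)^2 := sq_abs _
      linarith
    rw [key xs, key x]
    have h1 : ∑ a, (xs a - v a)^2 ≤ ∑ a, (x a - v a)^2 := by
      rw [hls]; linarith
    nlinarith [hBpos]
end

section
/- Consider the Block LASSO problem: minimize over X ∈ ℝ^{d×r} the cost (1/2)‖Y − D X Bᵀ‖_F² + Σ_{i=1}^r λ_i ‖X_i‖₁ with λ_i > 0. Then X* = 0 is a solution if and only if λ_i ≥ ‖Dᵀ Y B_i‖_∞ for all i ≤ r, where ‖·‖_∞ is the entrywise maximum absolute value. -/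
open Matrix Finset

noncomputable def l1 {d : ℕ} (x : Fin d → ℝ) : ℝ := ∑ j, |x j|


lemma sum3_comm {α β γ : Type*} [Fintype α] [Fintype β] [Fintype γ] (f : α → β → γ → ℝ) :
    ∑ a, ∑ b, ∑ c, f a b c = ∑ c, ∑ b, ∑ a, f a b c := by
  rw [show (∑ a, ∑ b, ∑ c, f a b c) = ∑ a, ∑ c, ∑ b, f a b c from
    Finset.sum_congr rfl fun a _ => Finset.sum_comm, Finset.sum_comm]
  exact Finset.sum_congr rfl fun c _ => Finset.sum_comm

lemma sum4_comm {α β γ δ : Type*} [Fintype α] [Fintype β] [Fintype γ] [Fintype δ]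
    (f : α → β → γ → δ → ℝ) :
    ∑ a, ∑ b, ∑ c, ∑ e, f a b c e = ∑ e, ∑ c, ∑ b, ∑ a, f a b c e := by
  rw [show (∑ a, ∑ b, ∑ c, ∑ e, f a b c e) = ∑ a, ∑ e, ∑ c, ∑ b, f a b c e from
    Finset.sum_congr rfl fun a _ => sum3_comm _, Finset.sum_comm]
  refine Finset.sum_congr rfl fun e _ => ?_
  rw [Finset.sum_comm]
  exact Finset.sum_congr rfl fun c _ => Finset.sum_comm

lemma trace_id {n m d r : ℕ} (Y : Matrix (Fin n) (Fin m) ℝ)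
    (D : Matrix (Fin n) (Fin d) ℝ) (Z : Matrix (Fin d) (Fin r) ℝ)
    (B : Matrix (Fin m) (Fin r) ℝ) :
    ∑ a, ∑ b, Y a b * (D * Z * Bᵀ) a b = ∑ j, ∑ i, (Dᵀ * Y * B) j i * Z j i := by
  have L : ∑ a, ∑ b, Y a b * (D * Z * Bᵀ) a b
      = ∑ a, ∑ b, ∑ i, ∑ j, Y a b * D a j * Z j i * B b i := by
    simp only [mul_apply, transpose_apply, Finset.sum_mul, Finset.mul_sum]
    refine Finset.sum_congr rfl fun a _ => Finset.sum_congr rfl fun b _ =>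
      Finset.sum_congr rfl fun i _ => Finset.sum_congr rfl fun j _ => by ring
  have R : ∑ j, ∑ i, (Dᵀ * Y * B) j i * Z j i
      = ∑ j, ∑ i, ∑ b, ∑ a, Y a b * D a j * Z j i * B b i := by
    simp only [mul_apply, transpose_apply, Finset.sum_mul, Finset.mul_sum]
    refine Finset.sum_congr rfl fun j _ => Finset.sum_congr rfl fun i _ =>
      Finset.sum_congr rfl fun b _ => Finset.sum_congr rfl fun a _ => by ring
  rw [L, R, sum4_comm]

lemma frob2_sub {n m : ℕ} (Y M : Matrix (Fin n) (Fin m) ℝ) :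
    frob2 (Y - M) = frob2 Y - 2 * (∑ a, ∑ b, Y a b * M a b) + frob2 M := by
  simp only [frob2, Matrix.sub_apply, Finset.mul_sum, ← Finset.sum_add_distrib,
    ← Finset.sum_sub_distrib]
  exact Finset.sum_congr rfl fun a _ => Finset.sum_congr rfl fun b _ => by ring

lemma frob2_nonneg {n m : ℕ} (M : Matrix (Fin n) (Fin m) ℝ) : 0 ≤ frob2 M := by
  unfold frob2; positivity

lemma frob2_smul {n m : ℕ} (t : ℝ) (M : Matrix (Fin n) (Fin m) ℝ) :
    frob2 (t • M) = t^2 * frob2 M := by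
  simp only [frob2, Matrix.smul_apply, smul_eq_mul, mul_pow, Finset.mul_sum]

/-- `X* = 0` solves the Block LASSO if and only if
`λ_i ≥ ‖Dᵀ Y B_i‖_∞` for all `i`. -/
theorem stmt6 {n m d r : ℕ} (hd : 0 < d) (Y : Matrix (Fin n) (Fin m) ℝ)
    (D : Matrix (Fin n) (Fin d) ℝ) (B : Matrix (Fin m) (Fin r) ℝ)
    (lam : Fin r → ℝ) (hlam : ∀ i, 0 < lam i) :
    (∀ Z : Matrix (Fin d) (Fin r) ℝ,
        (1/2) * frob2 (Y - D * (0 : Matrix (Fin d) (Fin r) ℝ) * Bᵀ) +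
          ∑ i, lam i * l1 (_root_.col (0 : Matrix (Fin d) (Fin r) ℝ) i) ≤
        (1/2) * frob2 (Y - D * Z * Bᵀ) + ∑ i, lam i * l1 (_root_.col Z i)) ↔
      ∀ i, (⨆ j : Fin d, |(Dᵀ * Y * B) j i|) ≤ lam i := by
  haveI : Nonempty (Fin d) := ⟨⟨0, hd⟩⟩
  set G := Dᵀ * Y * B with hG
  have hzero : (1/2) * frob2 (Y - D * (0 : Matrix (Fin d) (Fin r) ℝ) * Bᵀ) +
      ∑ i, lam i * l1 (_root_.col (0 : Matrix (Fin d) (Fin r) ℝ) i) = (1/2) * frob2 Y := by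
    simp [l1, _root_.col, Matrix.mul_zero, Matrix.zero_mul]
  have hexp : ∀ Z : Matrix (Fin d) (Fin r) ℝ,
      frob2 (Y - D * Z * Bᵀ)
        = frob2 Y - 2 * (∑ j, ∑ i, G j i * Z j i) + frob2 (D * Z * Bᵀ) := by
    intro Z; rw [frob2_sub, trace_id]
  rw [hzero]
  constructor
  · intro hmin i
    refine ciSup_le fun j => ?_
    by_contra hcon
    push_neg at hcon
    set s : ℝ := if 0 ≤ G j i then 1 else -1 with hs
    have hsabs : |s| = 1 := by rw [hs]; split_ifs <;> simp
    have hsG : G j i * s = |G j i| := by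
      rw [hs]; split_ifs with h
      · simp [abs_of_nonneg h]
      · push_neg at h; rw [abs_of_neg h, mul_neg_one]
    set W : Matrix (Fin d) (Fin r) ℝ :=
      Matrix.of fun j' i' => if j' = j ∧ i' = i then s else 0 with hW
    set C : ℝ := frob2 (D * W * Bᵀ) with hC
    have hCnn : 0 ≤ C := frob2_nonneg _
    set ε : ℝ := |G j i| - lam i with hε
    have hεpos : 0 < ε := by simp [hε]; linarith
    set t : ℝ := ε / (C + 1) with ht
    have htpos : 0 < t := div_pos hεpos (by linarith)
    have htC : t * (C + 1) = ε := by
      rw [ht]; field_simp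
    have hZW : t • W = Matrix.of fun j' i' =>
        if j' = j ∧ i' = i then t * s else 0 := by
      ext j' i'
      simp only [Matrix.smul_apply, hW, Matrix.of_apply, smul_eq_mul]
      split_ifs <;> ring
    have key := hmin (t • W)
    rw [hexp] at key
    -- compute inner product
    have hinner : ∑ j', ∑ i', G j' i' * (t • W) j' i' = t * |G j i| := by
      rw [hZW]
      simp only [Matrix.of_apply, mul_ite, mul_zero, ite_and]
      rw [Finset.sum_comm]
      simp [Finset.sum_ite_eq', mul_comm, ← hsG]
      ring
    -- compute penalty
    have hpen : ∑ i', lam i' * l1 (_root_.col (t • W) i') = lam i * t := by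
      rw [hZW]
      simp only [l1, _root_.col, Matrix.of_apply, ite_and, apply_ite abs, abs_zero]
      simp [Finset.sum_ite_eq', abs_mul, hsabs, abs_of_pos htpos]
    have hfrob : frob2 (D * (t • W) * Bᵀ) = t^2 * C := by
      rw [show D * (t • W) * Bᵀ = t • (D * W * Bᵀ) by
        rw [Matrix.mul_smul, Matrix.smul_mul], frob2_smul, hC]
    rw [hinner, hpen, hfrob] at key
    -- key : (1/2) * frob2 Y ≤ (1/2) * (frob2 Y - 2*(t*|G j i|) + t^2*C) + lam i * t
    have hGabs : |G j i| = lam i + ε := by rw [hε]; ring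
    rw [hGabs] at key
    nlinarith [sq_nonneg t, mul_pos htpos htpos, mul_pos htpos hεpos]
  · intro hsup Z
    have hb : ∀ i j, |G j i| ≤ lam i := fun i j =>
      le_trans (le_ciSup (f := fun j => |G j i|) (Set.Finite.bddAbove (Set.finite_range _)) j) (hsup i)
    have h1 : ∑ j, ∑ i, G j i * Z j i ≤ ∑ i, lam i * l1 (_root_.col Z i) := by
      rw [Finset.sum_comm]
      refine Finset.sum_le_sum fun i _ => ?_
      have : ∑ j, G j i * Z j i ≤ ∑ j, lam i * |Z j i| := by
        refine Finset.sum_le_sum fun j _ => ?_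
        calc G j i * Z j i ≤ |G j i * Z j i| := le_abs_self _
          _ = |G j i| * |Z j i| := abs_mul _ _
          _ ≤ lam i * |Z j i| := mul_le_mul_of_nonneg_right (hb i j) (abs_nonneg _)
      simpa [l1, _root_.col, Finset.mul_sum] using this
    rw [hexp]
    have h2 := frob2_nonneg (D * Z * Bᵀ)
    linarith
end

section
/- Consider the Block LASSO problem: minimize (1/2)‖Y − D X Bᵀ‖_F² + Σ_i λ_i ‖X_i‖₁ over X ∈ ℝ^{d×r} with λ_i > 0. If X* is the unique solution, then for each i ≤ r, the submatrix D_{S_i} of D with columns restricted to S_i = supp(X*_i) has full column rank; in particular ‖X*_i‖_0 ≤ n. -/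
open Matrix Finset

lemma abs_add_small (x tv : ℝ) (hx : x ≠ 0) (h : |tv| < |x|) :
    |x + tv| = |x| + (if 0 < x then 1 else -1) * tv := by
  rcases hx.lt_or_gt with hneg | hpos
  · rw [abs_of_neg hneg] at h
    rw [if_neg (not_lt.2 hneg.le), abs_of_neg hneg, abs_of_neg (by cases abs_lt.1 h; linarith)]
    ring
  · rw [abs_of_pos hpos] at h
    rw [if_pos hpos, abs_of_pos hpos, abs_of_pos (by cases abs_lt.1 h; linarith)]
    ring

/-- if `X*` is the unique Block LASSO solution, then for each
column `i`, the columns of `D` indexed by `supp(X*_i)` are linearly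
independent (full column rank), and in particular `‖X*_i‖₀ ≤ n`. -/
theorem stmt7 {n m d r : ℕ} (Y : Matrix (Fin n) (Fin m) ℝ)
    (D : Matrix (Fin n) (Fin d) ℝ) (B : Matrix (Fin m) (Fin r) ℝ)
    (lam : Fin r → ℝ) (hlam : ∀ i, 0 < lam i)
    (Xs : Matrix (Fin d) (Fin r) ℝ)
    (hmin : ∀ Z : Matrix (Fin d) (Fin r) ℝ,
      (1/2) * frob2 (Y - D * Xs * Bᵀ) + ∑ i, lam i * l1 (_root_.col Xs i) ≤
        (1/2) * frob2 (Y - D * Z * Bᵀ) + ∑ i, lam i * l1 (_root_.col Z i))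
    (huniq : ∀ Z : Matrix (Fin d) (Fin r) ℝ,
      (1/2) * frob2 (Y - D * Z * Bᵀ) + ∑ i, lam i * l1 (_root_.col Z i) =
        (1/2) * frob2 (Y - D * Xs * Bᵀ) + ∑ i, lam i * l1 (_root_.col Xs i) → Z = Xs) :
    ∀ i : Fin r,
      LinearIndependent ℝ (fun j : {j : Fin d // Xs j i ≠ 0} => Dᵀ (j : Fin d)) ∧
      l0 (_root_.col Xs i) ≤ n := by
  intro i
  have hLI : LinearIndependent ℝ (fun j : {j : Fin d // Xs j i ≠ 0} => Dᵀ (j : Fin d)) := by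
    by_contra hnot
    rw [Fintype.not_linearIndependent_iff] at hnot
    obtain ⟨g, hg0, j0, hj0⟩ := hnot
    classical
    set v : Fin d → ℝ := fun j => if h : Xs j i ≠ 0 then g ⟨j, h⟩ else 0 with hv
    have hvsupp : ∀ j, Xs j i = 0 → v j = 0 := by
      intro j hj; simp [hv, hj]
    have hvmem : ∀ j : {j : Fin d // Xs j i ≠ 0}, v (j : Fin d) = g j := by
      intro j; simp only [hv]; rw [dif_pos j.2]
    -- D annihilates v
    have hDv : ∀ k, ∑ j, D k j * v j = 0 := by
      intro k
      have h1 := congrFun hg0 k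
      simp only [Finset.sum_apply, Pi.smul_apply, Matrix.transpose_apply, smul_eq_mul,
        Pi.zero_apply] at h1
      calc ∑ j : Fin d, D k j * v j
          = ∑ j ∈ Finset.univ.filter (fun j => Xs j i ≠ 0), D k j * v j := by
            refine (Finset.sum_filter_of_ne ?_).symm
            intro j _ hne hp
            exact hne (by rw [hvsupp j hp, mul_zero])
        _ = ∑ j : {j : Fin d // Xs j i ≠ 0}, D k (j : Fin d) * v (j : Fin d) :=
            Finset.sum_subtype _ (by simp) _
        _ = ∑ j : {j : Fin d // Xs j i ≠ 0}, g j * D k (j : Fin d) := by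
            refine Finset.sum_congr rfl fun j _ => ?_
            rw [hvmem j]; ring
        _ = 0 := h1
    -- choose a small step size ε
    have hne : (Finset.univ : Finset (Fin d)).Nonempty := ⟨(j0 : Fin d), Finset.mem_univ _⟩
    set f : Fin d → ℝ := fun j => if v j = 0 then 1 else |Xs j i| / (2 * |v j|) with hf
    set ε : ℝ := Finset.univ.inf' hne f with hε
    have hfpos : ∀ j, 0 < f j := by
      intro j
      simp only [hf]
      split_ifs with h
      · norm_num
      · have hx : Xs j i ≠ 0 := fun hx => h (hvsupp j hx)
        positivity
    have hεpos : 0 < ε := (Finset.lt_inf'_iff hne).2 fun j _ => hfpos j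
    have hεle : ∀ j, ε ≤ f j := fun j => Finset.inf'_le _ (Finset.mem_univ j)
    have hεsmall : ∀ j, Xs j i ≠ 0 → ε * |v j| < |Xs j i| := by
      intro j hj
      by_cases hvj : v j = 0
      · rw [hvj, abs_zero, mul_zero]; exact abs_pos.2 hj
      · have h1 : ε ≤ |Xs j i| / (2 * |v j|) := by
          have h0 := hεle j
          simp only [hf] at h0
          rwa [if_neg hvj] at h0
        have hv' : 0 < |v j| := abs_pos.2 hvj
        have h2 : ε * |v j| ≤ |Xs j i| / 2 := by
          calc ε * |v j| ≤ |Xs j i| / (2 * |v j|) * |v j| :=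
                mul_le_mul_of_nonneg_right h1 hv'.le
            _ = |Xs j i| / 2 := by field_simp
        have := abs_pos.2 hj
        linarith
    -- direction of the step
    set c : ℝ := ∑ j, (if 0 < Xs j i then 1 else -1) * v j with hc
    set t : ℝ := if 0 ≤ c then -ε else ε with ht
    have htne : t ≠ 0 := by
      rw [ht]; split_ifs <;> [exact neg_ne_zero.2 hεpos.ne'; exact hεpos.ne']
    have htabs : |t| = ε := by
      rw [ht]; split_ifs
      · rw [abs_neg, abs_of_pos hεpos]
      · rw [abs_of_pos hεpos]
    have htc : t * c ≤ 0 := by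
      rw [ht]; split_ifs with h
      · nlinarith
      · nlinarith [le_of_not_ge h]
    -- perturbed matrix
    set vM : Matrix (Fin d) (Fin r) ℝ := Matrix.of fun j k => if k = i then v j else 0 with hvM
    set Z : Matrix (Fin d) (Fin r) ℝ := Xs + t • vM with hZ
    have hZcol : ∀ j, Z j i = Xs j i + t * v j := by
      intro j; simp [hZ, hvM]
    have hZcol' : ∀ k j, k ≠ i → Z j k = Xs j k := by
      intro k j hk; simp [hZ, hvM, hk]
    have hDvM : D * vM = 0 := by
      ext k l
      simp only [Matrix.mul_apply, hvM, Matrix.of_apply, Matrix.zero_apply]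
      split_ifs with h
      · exact hDv k
      · simp
    have hDZ : D * Z = D * Xs := by
      rw [hZ, Matrix.mul_add, Matrix.mul_smul, hDvM, smul_zero, add_zero]
    -- the l1 part
    have hl1i : l1 (_root_.col Z i) = l1 (_root_.col Xs i) + t * c := by
      simp only [l1, _root_.col]
      rw [hc, Finset.mul_sum, ← Finset.sum_add_distrib]
      refine Finset.sum_congr rfl fun j _ => ?_
      rw [hZcol j]
      by_cases hx : Xs j i = 0
      · rw [hvsupp j hx, hx]; simp
      · have habs := abs_add_small (Xs j i) (t * v j) hx
          (by rw [abs_mul, htabs]; exact hεsmall j hx)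
        rw [habs]; ring
    have hl1k : ∀ k, k ≠ i → _root_.col Z k = _root_.col Xs k := by
      intro k hk
      funext j
      exact hZcol' k j hk
    -- Z achieves the optimum
    have hobj : (1/2) * frob2 (Y - D * Z * Bᵀ) + ∑ k, lam k * l1 (_root_.col Z k) ≤
        (1/2) * frob2 (Y - D * Xs * Bᵀ) + ∑ k, lam k * l1 (_root_.col Xs k) := by
      rw [hDZ]
      refine add_le_add le_rfl (Finset.sum_le_sum fun k _ => ?_)
      by_cases hk : k = i
      · subst hk
        rw [hl1i]
        nlinarith [hlam k, htc]
      · rw [hl1k k hk]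
    have hZXs : Z = Xs := huniq Z (le_antisymm hobj (hmin Z))
    have h3 : Z (j0 : Fin d) i = Xs (j0 : Fin d) i := by rw [hZXs]
    rw [hZcol (j0 : Fin d)] at h3
    have h4 : t * v (j0 : Fin d) = 0 := by linarith
    rcases mul_eq_zero.1 h4 with h | h
    · exact htne h
    · rw [hvmem j0] at h; exact hj0 h
  refine ⟨hLI, ?_⟩
  have hcard := hLI.fintype_card_le_finrank
  rw [Module.finrank_fin_fun] at hcard
  rwa [Fintype.card_subtype] at hcard
end

section
/- The tightest convex relaxation (convex envelope / biconjugate) of the function f(X) = max_{i≤r} ‖X_i‖_0, restricted to the cube [−1,1]^{d×r}, is g(X) = max_{i≤r} ‖X_i‖₁. That is, the double Fenchel conjugate of f on [−1,1]^{d×r} equals the ℓ_{1,1} norm X ↦ max_i ‖X_i‖₁. -/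
open Matrix Finset

/-- The cube `[-1,1]^{d×r}`. -/
def cube (d r : ℕ) : Set (Matrix (Fin d) (Fin r) ℝ) := {X | ∀ i j, |X i j| ≤ 1}

/-- Trace inner product. -/
noncomputable def ip {d r : ℕ} (Y X : Matrix (Fin d) (Fin r) ℝ) : ℝ := ∑ i, ∑ j, Y i j * X i j

/-- `f(X) = max_i ‖X_i‖₀`. -/
noncomputable def f00 {d r : ℕ} (X : Matrix (Fin d) (Fin r) ℝ) : ℝ :=
  ((Finset.univ.sup fun i => l0 (_root_.col X i) : ℕ) : ℝ)

/-- Fenchel conjugate of a function, with the supremum taken over the cube. -/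
noncomputable def fconjCube {d r : ℕ} (f : Matrix (Fin d) (Fin r) ℝ → ℝ)
    (Y : Matrix (Fin d) (Fin r) ℝ) : ℝ :=
  sSup {c : ℝ | ∃ X ∈ cube d r, c = ip Y X - f X}

/-- Biconjugate (convex envelope on the cube): the conjugate of `fconjCube f`,
with the outer supremum over all of `ℝ^{d×r}`. -/
noncomputable def biconj {d r : ℕ} (f : Matrix (Fin d) (Fin r) ℝ → ℝ)
    (X : Matrix (Fin d) (Fin r) ℝ) : ℝ :=
  sSup {c : ℝ | ∃ Y : Matrix (Fin d) (Fin r) ℝ, c = ip Y X - fconjCube f Y}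

noncomputable def Tk {n : ℕ} (k : ℕ) (a : Fin n → ℝ) : ℝ :=
  (Finset.univ.powerset.filter fun s : Finset (Fin n) => s.card ≤ k).sup'
    ⟨∅, by simp⟩ fun s => ∑ j ∈ s, a j
lemma sum_le_Tk {n : ℕ} (k : ℕ) (a : Fin n → ℝ) {s : Finset (Fin n)} (h : s.card ≤ k) :
    ∑ j ∈ s, a j ≤ Tk k a :=
  Finset.le_sup' (f := fun s => ∑ j ∈ s, a j)
    (by simp [Finset.mem_filter, h] : s ∈ _)
lemma Tk_exists {n : ℕ} (k : ℕ) (a : Fin n → ℝ) :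
    ∃ s : Finset (Fin n), s.card ≤ k ∧ Tk k a = ∑ j ∈ s, a j := by
  obtain ⟨s, hs, h⟩ := Finset.exists_mem_eq_sup'
    (⟨∅, by simp⟩ : (Finset.univ.powerset.filter fun s : Finset (Fin n) => s.card ≤ k).Nonempty)
    (fun s => ∑ j ∈ s, a j)
  exact ⟨s, (Finset.mem_filter.mp hs).2, h⟩
lemma Tk_nonneg {n : ℕ} (k : ℕ) {a : Fin n → ℝ} (_ : ∀ j, 0 ≤ a j) : 0 ≤ Tk k a := by
  have := sum_le_Tk k a (s := ∅) (by simp)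
  simpa using this
lemma Tk_mono {n : ℕ} {k k' : ℕ} (h : k ≤ k') (a : Fin n → ℝ) : Tk k a ≤ Tk k' a := by
  obtain ⟨s, hs, hval⟩ := Tk_exists k a
  rw [hval]
  exact sum_le_Tk k' a (hs.trans h)

lemma Tk_shift {n k : ℕ} (hk : k ≤ n + 1) (a : Fin (n + 1) → ℝ) (m : Fin (n + 1))
    (hmin : ∀ j, a m ≤ a j) :
    Tk k (fun j => a (m.succAbove j) - a m) + k * a m ≤ Tk k a := by
  set b : Fin n → ℝ := fun j => a (m.succAbove j) - a m with hb
  have hbnn : ∀ j, 0 ≤ b j := fun j => sub_nonneg.mpr (hmin _)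
  obtain ⟨s, hs, hval⟩ := Tk_exists k b
  rcases Nat.lt_or_ge k (n + 1) with hkn | hkn
  · -- k ≤ n : extend s to card exactly k inside Fin n
    have hkn' : k ≤ n := Nat.lt_succ_iff.mp hkn
    obtain ⟨u, hsu, -, hu⟩ := Finset.exists_subsuperset_card_eq (s.subset_univ)
      hs (by simpa using hkn')
    have h1 : Tk k b ≤ ∑ j ∈ u, b j := by
      rw [hval]
      exact Finset.sum_le_sum_of_subset_of_nonneg hsu (fun j _ _ => hbnn j)
    have h2 : ∑ j ∈ u, b j + k * a m = ∑ j ∈ u.image m.succAbove, a j := by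
      rw [Finset.sum_image (fun x _ y _ h => Fin.succAbove_right_injective h)]
      rw [← hu]
      simp [hb, Finset.sum_sub_distrib]
    have h3 : ∑ j ∈ u.image m.succAbove, a j ≤ Tk k a := by
      apply sum_le_Tk
      calc (u.image m.succAbove).card ≤ u.card := Finset.card_image_le
        _ = k := hu
    linarith
  · -- k = n+1 (k ≥ n+1): use univ
    have h1 : Tk k b ≤ ∑ j, b j := by
      rw [hval]
      exact Finset.sum_le_sum_of_subset_of_nonneg s.subset_univ (fun j _ _ => hbnn j)
    have h2 : ∑ j, b j + (n + 1) * a m = ∑ j, a j := by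
      rw [Fin.sum_univ_succAbove a m]
      simp [hb, Finset.sum_sub_distrib]
      ring
    have h3 : ∑ j : Fin (n+1), a j ≤ Tk k a := by
      apply sum_le_Tk
      simpa using hkn
    have hkeq : (k : ℝ) = (n : ℝ) + 1 := by
      have : k = n + 1 := le_antisymm hk hkn
      rw [this]; push_cast; ring
    rw [hkeq]
    linarith [h1, h3, h2]

lemma key_ineq (k : ℕ) (θ : ℝ) (hθ0 : 0 ≤ θ) (hθ1 : θ ≤ 1) :
    ∀ {n : ℕ} (a t : Fin n → ℝ), (∀ j, 0 ≤ a j) → (∀ j, 0 ≤ t j) → (∀ j, t j ≤ 1) →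
    (∑ j, t j ≤ k + θ) →
    ∑ j, a j * t j ≤ (1 - θ) * Tk k a + θ * Tk (k + 1) a := by
  intro n
  induction n with
  | zero =>
    intro a t ha ht0 ht1 hsum
    have h0 : 0 ≤ Tk k a := Tk_nonneg k ha
    have h1 : 0 ≤ Tk (k + 1) a := Tk_nonneg (k + 1) ha
    simp only [Fin.sum_univ_zero]
    nlinarith
  | succ n ih =>
    intro a t ha ht0 ht1 hsum
    rcases Nat.lt_or_ge n k with hkn | hkn
    · -- n + 1 ≤ k : trivial bound
      have h1 : ∑ j, a j * t j ≤ ∑ j, a j :=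
        Finset.sum_le_sum fun j _ => by nlinarith [ha j, ht0 j, ht1 j]
      have h2 : ∑ j : Fin (n+1), a j ≤ Tk k a := sum_le_Tk k a (by simpa using hkn)
      have h3 : Tk k a ≤ Tk (k + 1) a := Tk_mono (Nat.le_succ k) a
      nlinarith
    · -- k ≤ n
      obtain ⟨m, -, hm⟩ := Finset.exists_min_image Finset.univ a ⟨0, Finset.mem_univ 0⟩
      have hmin : ∀ j, a m ≤ a j := fun j => hm j (Finset.mem_univ j)
      set b : Fin n → ℝ := fun j => a (m.succAbove j) - a m with hbdef
      set s : Fin n → ℝ := fun j => t (m.succAbove j) with hsdef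
      have hsum' : ∑ j, s j ≤ k + θ := by
        have := Fin.sum_univ_succAbove t m
        have h := ht0 m
        rw [this] at hsum
        simpa [hsdef] using by linarith
      have hIH := ih b s (fun j => sub_nonneg.mpr (hmin _)) (fun j => ht0 _) (fun j => ht1 _) hsum'
      have hsplit : ∑ j, a j * t j = ∑ j, b j * s j + a m * (∑ j, t j) := by
        rw [Fin.sum_univ_succAbove (fun j => a j * t j) m, Fin.sum_univ_succAbove t m]
        simp only [hbdef, hsdef]
        rw [show (fun j : Fin n => (a (m.succAbove j) - a m) * t (m.succAbove j)) =
            fun j : Fin n => a (m.succAbove j) * t (m.succAbove j) - a m * t (m.succAbove j)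
          from funext fun j => by ring]
        rw [Finset.sum_sub_distrib, ← Finset.mul_sum]
        ring
      have hS1 := Tk_shift (Nat.le_succ_of_le hkn) a m hmin
      have hS2 := Tk_shift (Nat.succ_le_succ hkn) a m hmin
      rw [← hbdef] at hS1 hS2
      simp only [Nat.succ_eq_add_one] at hS1 hS2
      push_cast at hS1 hS2 ⊢
      have hbound : a m * (∑ j, t j) ≤ a m * (k + θ) :=
        mul_le_mul_of_nonneg_left hsum (ha m)
      nlinarith [mul_le_mul_of_nonneg_left hS1 (sub_nonneg.mpr hθ1),
        mul_le_mul_of_nonneg_left hS2 hθ0, hIH, hsplit, hbound]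

/-! Auxiliary facts -/

noncomputable def sgn (x : ℝ) : ℝ := if x < 0 then -1 else if 0 < x then 1 else 0

lemma sgn_mul_self (x : ℝ) : sgn x * x = |x| := by
  unfold sgn
  rcases lt_trichotomy x 0 with h | h | h
  · simp [h, not_lt.mpr h.le, abs_of_neg h]
  · simp [h]
  · simp [not_lt.mpr h.le, h, abs_of_pos h]

lemma abs_sgn_le (x : ℝ) : |sgn x| ≤ 1 := by
  unfold sgn
  rcases lt_trichotomy x 0 with h | h | h
  · simp [h]
  · simp [h]
  · simp [not_lt.mpr h.le, h]

lemma f00_nonneg {d r : ℕ} (X : Matrix (Fin d) (Fin r) ℝ) : 0 ≤ f00 X := Nat.cast_nonneg _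

lemma f00_zero {d r : ℕ} : f00 (0 : Matrix (Fin d) (Fin r) ℝ) = 0 := by
  unfold f00 l0 _root_.col
  simp

lemma zero_mem_cube {d r : ℕ} : (0 : Matrix (Fin d) (Fin r) ℝ) ∈ cube d r := by
  intro i j; simp

lemma ip_zero_right {d r : ℕ} (Y : Matrix (Fin d) (Fin r) ℝ) : ip Y 0 = 0 := by
  unfold ip; simp

lemma ip_le_of_cube {d r : ℕ} (Y : Matrix (Fin d) (Fin r) ℝ) {X : Matrix (Fin d) (Fin r) ℝ}
    (hX : X ∈ cube d r) : ip Y X ≤ ∑ i, ∑ j, |Y i j| := by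
  apply Finset.sum_le_sum; intro i _
  apply Finset.sum_le_sum; intro j _
  calc Y i j * X i j ≤ |Y i j * X i j| := le_abs_self _
    _ = |Y i j| * |X i j| := abs_mul _ _
    _ ≤ |Y i j| * 1 := mul_le_mul_of_nonneg_left (hX i j) (abs_nonneg _)
    _ = |Y i j| := mul_one _

lemma fstar_bddAbove {d r : ℕ} (Y : Matrix (Fin d) (Fin r) ℝ) :
    BddAbove {c : ℝ | ∃ X ∈ cube d r, c = ip Y X - f00 X} := by
  refine ⟨∑ i, ∑ j, |Y i j|, ?_⟩
  rintro c ⟨X, hX, rfl⟩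
  have := ip_le_of_cube Y hX
  have := f00_nonneg X
  linarith

lemma fstar_zero_mem {d r : ℕ} (Y : Matrix (Fin d) (Fin r) ℝ) :
    (0 : ℝ) ∈ {c : ℝ | ∃ X ∈ cube d r, c = ip Y X - f00 X} :=
  ⟨0, zero_mem_cube, by rw [ip_zero_right, f00_zero, sub_zero]⟩

lemma fstar_nonneg {d r : ℕ} (Y : Matrix (Fin d) (Fin r) ℝ) : 0 ≤ fconjCube f00 Y :=
  le_csSup (fstar_bddAbove Y) (fstar_zero_mem Y)

lemma fstar_ge {d r : ℕ} (Y : Matrix (Fin d) (Fin r) ℝ) (k : ℕ) :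
    (∑ q : Fin r, Tk k fun p => |Y p q|) - k ≤ fconjCube f00 Y := by
  have h : ∀ q : Fin r, ∃ s : Finset (Fin d), s.card ≤ k ∧
      (Tk k fun p => |Y p q|) = ∑ p ∈ s, |Y p q| := fun q => Tk_exists k _
  choose s hs1 hs2 using h
  classical
  set Z : Matrix (Fin d) (Fin r) ℝ := fun p q => if p ∈ s q then sgn (Y p q) else 0 with hZ
  have hZcube : Z ∈ cube d r := by
    intro p q
    by_cases hp : p ∈ s q <;> simp [hZ, hp, abs_sgn_le]
  have hipZ : ip Y Z = ∑ q : Fin r, Tk k fun p => |Y p q| := by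
    unfold ip
    rw [Finset.sum_comm]
    apply Finset.sum_congr rfl
    intro q _
    rw [hs2 q]
    rw [← Finset.sum_filter_of_ne (p := fun p => p ∈ s q)
      (f := fun p => Y p q * Z p q) ?_]
    · rw [Finset.filter_mem_eq_inter, Finset.univ_inter]
      apply Finset.sum_congr rfl
      intro p hp
      simp only [hZ, hp, if_pos]
      rw [mul_comm, sgn_mul_self]
    · intro p _ hne
      by_contra hp
      apply hne
      simp [hZ, hp]
  have hfZ : f00 Z ≤ (k : ℝ) := by
    unfold f00
    have hsup : (Finset.univ.sup fun i => l0 (_root_.col Z i)) ≤ k := by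
      apply Finset.sup_le
      intro q _
      have hsub : (Finset.univ.filter fun p => _root_.col Z q p ≠ 0) ⊆ s q := by
        intro p hp
        simp only [Finset.mem_filter] at hp
        by_contra hns
        exact hp.2 (by simp [_root_.col, hZ, hns])
      exact (Finset.card_le_card hsub).trans (hs1 q)
    exact_mod_cast hsup
  calc (∑ q : Fin r, Tk k fun p => |Y p q|) - (k : ℝ) = ip Y Z - k := by rw [hipZ]
    _ ≤ ip Y Z - f00 Z := by linarith
    _ ≤ fconjCube f00 Y := le_csSup (fstar_bddAbove Y) ⟨Z, hZcube, rfl⟩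

lemma signY_fstar {d r : ℕ} (X : Matrix (Fin d) (Fin r) ℝ) (i0 : Fin r) :
    fconjCube f00 (fun p q => if q = i0 then sgn (X p i0) else 0) = 0 := by
  classical
  set Y : Matrix (Fin d) (Fin r) ℝ := fun p q => if q = i0 then sgn (X p i0) else 0 with hY
  apply le_antisymm
  · apply csSup_le ⟨0, fstar_zero_mem Y⟩
    rintro c ⟨Z, hZ, rfl⟩
    have hip : ip Y Z = ∑ p, sgn (X p i0) * Z p i0 := by
      unfold ip
      apply Finset.sum_congr rfl
      intro p _
      rw [Finset.sum_eq_single i0]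
      · simp [hY]
      · intro q _ hq; simp [hY, hq]
      · intro h; exact absurd (Finset.mem_univ i0) h
    have hbound : ∑ p, sgn (X p i0) * Z p i0 ≤ (l0 (_root_.col Z i0) : ℝ) := by
      have : ∀ p : Fin d, sgn (X p i0) * Z p i0 ≤ (if Z p i0 ≠ 0 then (1:ℝ) else 0) := by
        intro p
        by_cases h : Z p i0 = 0
        · simp [h]
        · simp only [h, ne_eq, not_false_eq_true, if_pos]
          calc sgn (X p i0) * Z p i0 ≤ |sgn (X p i0) * Z p i0| := le_abs_self _
            _ = |sgn (X p i0)| * |Z p i0| := abs_mul _ _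
            _ ≤ 1 * 1 := mul_le_mul (abs_sgn_le _) (hZ p i0) (abs_nonneg _) zero_le_one
            _ = 1 := one_mul 1
      calc ∑ p, sgn (X p i0) * Z p i0 ≤ ∑ p, (if Z p i0 ≠ 0 then (1:ℝ) else 0) :=
            Finset.sum_le_sum fun p _ => this p
        _ = (l0 (_root_.col Z i0) : ℝ) := by
            rw [Finset.sum_boole]
            unfold l0 _root_.col
            norm_num
    have hl0 : (l0 (_root_.col Z i0) : ℝ) ≤ f00 Z := by
      unfold f00
      exact_mod_cast Finset.le_sup (f := fun i => l0 (_root_.col Z i)) (Finset.mem_univ i0)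
    linarith [hip, hbound, hl0]
  · exact fstar_nonneg Y

/-- the tightest convex relaxation of `max_i ‖X_i‖₀` on
`[-1,1]^{d×r}` is `max_i ‖X_i‖₁`. -/
theorem stmt8 {d r : ℕ} (hr : 0 < r) :
    ∀ X ∈ cube d r, biconj f00 X = ⨆ i : Fin r, l1 (_root_.col X i) := by
  intro X hX
  haveI : Nonempty (Fin r) := ⟨⟨0, hr⟩⟩
  set c := ⨆ i : Fin r, l1 (_root_.col X i) with hc
  have hbdd : BddAbove (Set.range fun i : Fin r => l1 (_root_.col X i)) :=
    (Set.finite_range _).bddAbove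
  have hlec : ∀ i, l1 (_root_.col X i) ≤ c := fun i => le_ciSup hbdd i
  have hl1nn : ∀ i : Fin r, 0 ≤ l1 (_root_.col X i) :=
    fun i => Finset.sum_nonneg fun j _ => abs_nonneg _
  have hc0 : 0 ≤ c := (hl1nn (Classical.arbitrary _)).trans (hlec (Classical.arbitrary _))
  set k := ⌊c⌋₊ with hk
  set θ := c - k with hθ
  have hθ0 : 0 ≤ θ := sub_nonneg.mpr (Nat.floor_le hc0)
  have hθ1 : θ ≤ 1 := by
    have := Nat.lt_floor_add_one c
    rw [hθ]; linarith
  have hkθ : (k : ℝ) + θ = c := by rw [hθ]; ring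
  have keyY : ∀ Y, ip Y X - fconjCube f00 Y ≤ c := by
    intro Y
    have hA := fstar_ge Y k
    have hB := fstar_ge Y (k + 1)
    push_cast at hB
    have hip : ip Y X ≤ (1 - θ) * (∑ q : Fin r, Tk k fun p => |Y p q|)
        + θ * (∑ q : Fin r, Tk (k + 1) fun p => |Y p q|) := by
      have step1 : ip Y X ≤ ∑ q : Fin r, ∑ p : Fin d, |Y p q| * |X p q| := by
        unfold ip; rw [Finset.sum_comm]
        exact Finset.sum_le_sum fun q _ => Finset.sum_le_sum fun p _ =>
          calc Y p q * X p q ≤ |Y p q * X p q| := le_abs_self _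
            _ = |Y p q| * |X p q| := abs_mul _ _
      have step2 : ∀ q : Fin r, ∑ p, |Y p q| * |X p q| ≤
          (1 - θ) * Tk k (fun p => |Y p q|) + θ * Tk (k + 1) (fun p => |Y p q|) := by
        intro q
        apply key_ineq k θ hθ0 hθ1 (fun p => |Y p q|) (fun p => |X p q|)
          (fun p => abs_nonneg _) (fun p => abs_nonneg _) (fun p => hX p q)
        have hsum : ∑ p, |X p q| = l1 (_root_.col X q) := rfl
        rw [hsum, hkθ]
        exact hlec q
      calc ip Y X ≤ ∑ q : Fin r, ∑ p : Fin d, |Y p q| * |X p q| := step1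
        _ ≤ ∑ q : Fin r, ((1 - θ) * Tk k (fun p => |Y p q|)
              + θ * Tk (k + 1) (fun p => |Y p q|)) :=
            Finset.sum_le_sum fun q _ => step2 q
        _ = (1 - θ) * (∑ q : Fin r, Tk k fun p => |Y p q|)
              + θ * (∑ q : Fin r, Tk (k + 1) fun p => |Y p q|) := by
            rw [Finset.sum_add_distrib, Finset.mul_sum, Finset.mul_sum]
    nlinarith [mul_le_mul_of_nonneg_left hA (sub_nonneg.mpr hθ1),
      mul_le_mul_of_nonneg_left hB hθ0, hkθ, hip]
  have hbddB : BddAbove {c' : ℝ | ∃ Y : Matrix (Fin d) (Fin r) ℝ,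
      c' = ip Y X - fconjCube f00 Y} := by
    refine ⟨c, ?_⟩
    rintro c' ⟨Y, rfl⟩
    exact keyY Y
  have hupper : biconj f00 X ≤ c := by
    unfold biconj
    refine csSup_le ?_ ?_
    · exact ⟨ip (0 : Matrix (Fin d) (Fin r) ℝ) X - fconjCube f00 0,
        ⟨(0 : Matrix (Fin d) (Fin r) ℝ), rfl⟩⟩
    · rintro c' ⟨Y, rfl⟩
      exact keyY Y
  have hlower : ∀ i0 : Fin r, l1 (_root_.col X i0) ≤ biconj f00 X := by
    intro i0
    classical
    set Y : Matrix (Fin d) (Fin r) ℝ := fun p q => if q = i0 then sgn (X p i0) else 0 with hY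
    have hfY : fconjCube f00 Y = 0 := signY_fstar X i0
    have hipYX : ip Y X = l1 (_root_.col X i0) := by
      unfold ip
      have hp : ∀ p : Fin d, ∑ q : Fin r, Y p q * X p q = |X p i0| := by
        intro p
        rw [Finset.sum_eq_single i0]
        · simp only [hY, if_pos rfl]
          exact sgn_mul_self _
        · intro q _ hq; simp [hY, hq]
        · intro h; exact absurd (Finset.mem_univ i0) h
      rw [Finset.sum_congr rfl fun p _ => hp p]
      rfl
    calc l1 (_root_.col X i0) = ip Y X - fconjCube f00 Y := by rw [hipYX, hfY, sub_zero]
      _ ≤ biconj f00 X := le_csSup hbddB ⟨Y, rfl⟩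
  exact le_antisymm hupper (ciSup_le hlower)
end

section
/- The Fenchel conjugate, over the cube [−1,1]^{d×r}, of f(X) = max_{i≤r} ‖X_i‖_0 is f*(Y) = Σ_{j=1}^{d} 1[Σ_{i=1}^r |Y_{σ_i(j) i}| ≥ 1] · (−1 + Σ_{i=1}^r |Y_{σ_i(j) i}|), where for each column i, σ_i is a permutation of {1,…,d} sorting |Y_{·i}| in decreasing order. -/
open Matrix Finset

lemma aux_AB {d : ℕ} (v : Fin d → ℝ) (hv : ∀ j, 0 ≤ v j)
    (A B : Finset (Fin d)) (hcard : A.card ≤ B.card)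
    (hle : ∀ a ∈ A, ∀ b ∈ B, v a ≤ v b) :
    ∑ j ∈ A, v j ≤ ∑ j ∈ B, v j := by
  rcases A.eq_empty_or_nonempty with h | h
  · simpa [h] using Finset.sum_nonneg (fun j _ => hv j)
  · have hBne : B.Nonempty := Finset.card_pos.mp (lt_of_lt_of_le (Finset.card_pos.mpr h) hcard)
    obtain ⟨b0, hb0, hmin⟩ := B.exists_min_image v hBne
    calc ∑ j ∈ A, v j ≤ A.card • v b0 :=
          Finset.sum_le_card_nsmul A v (v b0) (fun a ha => hle a ha b0 hb0)
      _ ≤ B.card • v b0 := nsmul_le_nsmul_left (hv b0) hcard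
      _ ≤ ∑ j ∈ B, v j := Finset.card_nsmul_le_sum B v (v b0) hmin

lemma aux_top {d : ℕ} (v : Fin d → ℝ) (hv : ∀ j, 0 ≤ v j)
    (hm : ∀ j j' : Fin d, j ≤ j' → v j' ≤ v j) (T : Finset (Fin d)) (k : ℕ)
    (hT : T.card ≤ k) :
    ∑ j ∈ T, v j ≤ ∑ j ∈ univ.filter (fun j : Fin d => (j : ℕ) < k), v j := by
  set B := univ.filter (fun j : Fin d => (j : ℕ) < k) with hB
  have h1 : ∑ j ∈ T ∩ B, v j + ∑ j ∈ T \ B, v j = ∑ j ∈ T, v j :=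
    Finset.sum_inter_add_sum_sdiff T B v
  have h2 : ∑ j ∈ B ∩ T, v j + ∑ j ∈ B \ T, v j = ∑ j ∈ B, v j :=
    Finset.sum_inter_add_sum_sdiff B T v
  have hIC : T ∩ B = B ∩ T := Finset.inter_comm T B
  have hkey : ∑ j ∈ T \ B, v j ≤ ∑ j ∈ B \ T, v j := by
    have hcard : (T \ B).card ≤ (B \ T).card := by
      by_cases hk : d ≤ k
      · have : T \ B = ∅ := by
          rw [Finset.sdiff_eq_empty_iff_subset]
          intro a _
          simp [hB, lt_of_lt_of_le a.isLt hk]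
        simp [this]
      · push_neg at hk
        have hBcard : B.card = k := by
          have : B = Finset.Iio (⟨k, hk⟩ : Fin d) := by
            ext j; simp [hB, Fin.lt_def]
          rw [this, Fin.card_Iio]
        have e1 : (T ∩ B).card + (T \ B).card = T.card :=
          Finset.card_inter_add_card_sdiff T B
        have e2 : (B ∩ T).card + (B \ T).card = B.card :=
          Finset.card_inter_add_card_sdiff B T
        have : (B ∩ T).card = (T ∩ B).card := by rw [hIC]
        omega
    refine aux_AB v hv _ _ hcard ?_
    intro a ha b hb
    have ha' : ¬ ((a : ℕ) < k) := by
      have := (Finset.mem_sdiff.mp ha).2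
      simpa [hB] using this
    have hb' : (b : ℕ) < k := by
      have := (Finset.mem_sdiff.mp hb).1
      simpa [hB] using this
    exact hm b a (by omega)
  calc ∑ j ∈ T, v j = ∑ j ∈ T ∩ B, v j + ∑ j ∈ T \ B, v j := h1.symm
    _ ≤ ∑ j ∈ B ∩ T, v j + ∑ j ∈ B \ T, v j := by rw [hIC] at *; exact add_le_add le_rfl hkey
    _ = ∑ j ∈ B, v j := h2


/-- closed form of the Fenchel conjugate, over `[-1,1]^{d×r}`, of
`f(X) = max_i ‖X_i‖₀`, where each `σ i` sorts the `i`-th column of `|Y|`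
decreasingly. -/
theorem stmt9 {d r : ℕ} (Y : Matrix (Fin d) (Fin r) ℝ)
    (σ : Fin r → Equiv.Perm (Fin d))
    (hσ : ∀ i : Fin r, ∀ j j' : Fin d, j ≤ j' → |Y (σ i j') i| ≤ |Y (σ i j) i|) :
    fconjCube f00 Y =
      ∑ j : Fin d,
        (if 1 ≤ ∑ i : Fin r, |Y (σ i j) i| then (-1 + ∑ i : Fin r, |Y (σ i j) i|) else 0) := by
  set s : Fin d → ℝ := fun j => ∑ i : Fin r, |Y (σ i j) i| with hs
  set R : ℝ := ∑ j : Fin d, (if 1 ≤ s j then -1 + s j else 0) with hR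
  have hs_nonneg : ∀ j, 0 ≤ s j := fun j => Finset.sum_nonneg fun i _ => abs_nonneg _
  -- Upper bound
  have hub : ∀ X ∈ cube d r, ip Y X - f00 X ≤ R := by
    intro X hX
    set k : ℕ := Finset.univ.sup fun i => l0 (_root_.col X i) with hk
    set Bk := univ.filter (fun j : Fin d => (j : ℕ) < k) with hBk
    have hip : ip Y X ≤ ∑ j ∈ Bk, s j := by
      have step1 : ip Y X ≤ ∑ i' : Fin r, ∑ a ∈ univ.filter (fun a => X a i' ≠ 0), |Y a i'| := by
        rw [ip, Finset.sum_comm]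
        refine Finset.sum_le_sum fun i' _ => ?_
        rw [Finset.sum_filter]
        refine Finset.sum_le_sum fun a _ => ?_
        by_cases hxa : X a i' = 0
        · simp [hxa]
        · simp only [hxa, if_pos, ne_eq, not_false_eq_true, if_true]
          calc Y a i' * X a i' ≤ |Y a i' * X a i'| := le_abs_self _
            _ = |Y a i'| * |X a i'| := abs_mul _ _
            _ ≤ |Y a i'| * 1 := mul_le_mul_of_nonneg_left (hX a i') (abs_nonneg _)
            _ = |Y a i'| := mul_one _
      have step2 : ∀ i' : Fin r,
          ∑ a ∈ univ.filter (fun a => X a i' ≠ 0), |Y a i'| ≤ ∑ j ∈ Bk, |Y (σ i' j) i'| := by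
        intro i'
        set T := (univ.filter (fun a => X a i' ≠ 0)).map (σ i').symm.toEmbedding with hT
        have hrw : ∑ a ∈ univ.filter (fun a => X a i' ≠ 0), |Y a i'| =
            ∑ j ∈ T, |Y (σ i' j) i'| := by
          rw [hT, Finset.sum_map]
          simp
        rw [hrw]
        refine aux_top _ (fun j => abs_nonneg _) (hσ i') T k ?_
        rw [hT, Finset.card_map]
        exact Finset.le_sup (f := fun i => l0 (_root_.col X i)) (Finset.mem_univ i')
      have step3 : ∑ i' : Fin r, ∑ j ∈ Bk, |Y (σ i' j) i'| = ∑ j ∈ Bk, s j := by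
        rw [Finset.sum_comm]
      calc ip Y X ≤ ∑ i' : Fin r, ∑ a ∈ univ.filter (fun a => X a i' ≠ 0), |Y a i'| := step1
        _ ≤ ∑ i' : Fin r, ∑ j ∈ Bk, |Y (σ i' j) i'| := Finset.sum_le_sum fun i' _ => step2 i'
        _ = ∑ j ∈ Bk, s j := step3
    have hcardBk : Bk.card ≤ k := by
      have : Bk.card ≤ (Finset.range k).card := by
        refine Finset.card_le_card_of_injOn (fun j => (j : ℕ)) ?_ ?_
        · intro j hj; rw [hBk, Finset.mem_coe, Finset.mem_filter] at hj; simpa using hj.2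
        · intro a _ b _ hab; exact Fin.val_injective hab
      simpa using this
    have hf00 : f00 X = (k : ℝ) := rfl
    calc ip Y X - f00 X ≤ ∑ j ∈ Bk, s j - (k : ℝ) := by rw [hf00]; linarith [hip]
      _ ≤ ∑ j ∈ Bk, (s j - 1) := by
          rw [Finset.sum_sub_distrib, Finset.sum_const, nsmul_eq_mul, mul_one]
          have : (Bk.card : ℝ) ≤ (k : ℝ) := Nat.cast_le.mpr hcardBk
          linarith
      _ ≤ ∑ j ∈ Bk, (if 1 ≤ s j then -1 + s j else 0) := by
          refine Finset.sum_le_sum fun j _ => ?_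
          by_cases hj : 1 ≤ s j
          · rw [if_pos hj]; linarith
          · rw [if_neg hj]; linarith [not_le.mp hj]
      _ ≤ R := by
          rw [hR]
          refine Finset.sum_le_sum_of_subset_of_nonneg (Finset.filter_subset _ _) ?_
          intro j _ _
          by_cases hj : 1 ≤ s j
          · rw [if_pos hj]; linarith
          · rw [if_neg hj]
  -- Achiever
  set X0 : Matrix (Fin d) (Fin r) ℝ :=
    fun a i => if 1 ≤ s ((σ i).symm a) then (if 0 ≤ Y a i then 1 else -1) else 0 with hX0
  have hX0cube : X0 ∈ cube d r := by
    intro a i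
    by_cases h1 : 1 ≤ s ((σ i).symm a) <;> by_cases h2 : 0 ≤ Y a i <;>
      simp [hX0, h1, h2]
  set K : ℕ := (univ.filter fun j : Fin d => 1 ≤ s j).card with hK
  have h_l0 : ∀ i : Fin r, l0 (_root_.col X0 i) = K := by
    intro i
    have hcol : ∀ a : Fin d, _root_.col X0 i a ≠ 0 ↔ 1 ≤ s ((σ i).symm a) := by
      intro a
      simp only [_root_.col, hX0]
      by_cases h1 : 1 ≤ s ((σ i).symm a)
      · by_cases h2 : 0 ≤ Y a i <;> simp [h1, h2]
      · simp [h1]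
    rw [l0, hK]
    apply Finset.card_equiv (σ i).symm
    intro a
    simp only [Finset.mem_filter, Finset.mem_univ, true_and]
    exact hcol a
  have h_f00 : f00 X0 = (K : ℝ) := by
    rw [f00]
    congr 1
    rcases Nat.eq_zero_or_pos r with hr | hr
    · subst hr
      have : (univ : Finset (Fin d)).filter (fun j => 1 ≤ s j) = ∅ := by
        apply Finset.filter_false_of_mem
        intro j _
        simp only [hs]
        norm_num
      simp [hK, this]
    · have hne : (univ : Finset (Fin r)).Nonempty := ⟨⟨0, hr⟩, Finset.mem_univ _⟩
      calc (univ.sup fun i => l0 (_root_.col X0 i)) = univ.sup (fun _ : Fin r => K) := by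
            apply Finset.sup_congr rfl
            intro i _; exact h_l0 i
        _ = K := Finset.sup_const hne K
  have h_ip : ip Y X0 = ∑ j : Fin d, (if 1 ≤ s j then s j else 0) := by
    rw [ip, Finset.sum_comm]
    have col_eq : ∀ i' : Fin r, ∑ a : Fin d, Y a i' * X0 a i' =
        ∑ j : Fin d, (if 1 ≤ s j then |Y (σ i' j) i'| else 0) := by
      intro i'
      rw [← Equiv.sum_comp (σ i') (fun a => Y a i' * X0 a i')]
      refine Finset.sum_congr rfl fun j _ => ?_
      simp only [hX0, Equiv.symm_apply_apply]
      by_cases h1 : 1 ≤ s j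
      · rw [if_pos h1, if_pos h1]
        by_cases h2 : 0 ≤ Y (σ i' j) i'
        · rw [if_pos h2, mul_one, abs_of_nonneg h2]
        · rw [if_neg h2, mul_neg_one, abs_of_neg (not_le.mp h2)]
      · rw [if_neg h1, if_neg h1, mul_zero]
    calc ∑ i' : Fin r, ∑ a : Fin d, Y a i' * X0 a i'
        = ∑ i' : Fin r, ∑ j : Fin d, (if 1 ≤ s j then |Y (σ i' j) i'| else 0) :=
          Finset.sum_congr rfl fun i' _ => col_eq i'
      _ = ∑ j : Fin d, ∑ i' : Fin r, (if 1 ≤ s j then |Y (σ i' j) i'| else 0) :=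
          Finset.sum_comm
      _ = ∑ j : Fin d, (if 1 ≤ s j then s j else 0) := by
          refine Finset.sum_congr rfl fun j _ => ?_
          by_cases h1 : 1 ≤ s j <;> simp [h1, hs]
  have hKsum : (K : ℝ) = ∑ j : Fin d, (if 1 ≤ s j then (1:ℝ) else 0) := by
    rw [hK, Finset.sum_boole]
  have hmem : R ∈ {c : ℝ | ∃ X ∈ cube d r, c = ip Y X - f00 X} := by
    refine ⟨X0, hX0cube, ?_⟩
    rw [h_ip, h_f00, hKsum, ← Finset.sum_sub_distrib, hR]
    refine Finset.sum_congr rfl fun j _ => ?_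
    by_cases h1 : 1 ≤ s j <;> simp [h1] <;> ring
  -- conclude
  have hgoal : fconjCube f00 Y = R := by
    rw [fconjCube]
    refine le_antisymm ?_ ?_
    · refine csSup_le ⟨R, hmem⟩ ?_
      rintro c ⟨X, hXc, rfl⟩
      exact hub X hXc
    · refine le_csSup ⟨R, ?_⟩ hmem
      rintro c ⟨X, hXc, rfl⟩
      exact hub X hXc
  rw [hgoal, hR]
end

section
/- Consider the Mixed LASSO problem: minimize (1/2)‖Y − D X Bᵀ‖_F² + λ max_i ‖X_i‖₁ over X ∈ ℝ^{d×r}, with λ > 0 and D overcomplete (d > n). If X* is the unique solution and X* ≠ 0, then all columns of X* have equal ℓ₁ norm: ‖X*_i‖₁ = max_j ‖X*_j‖₁ for every i ≤ r, and there exists at least one column i such that D restricted to supp(X*_i) has full column rank (hence ‖X*_i‖_0 ≤ n). -/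
open Matrix Finset

lemma l1_nonneg {d : ℕ} (x : Fin d → ℝ) : 0 ≤ l1 x :=
  Finset.sum_nonneg fun j _ => abs_nonneg _

lemma abs_le_l1 {d : ℕ} (x : Fin d → ℝ) (j : Fin d) : |x j| ≤ l1 x :=
  Finset.single_le_sum (fun k _ => abs_nonneg (x k)) (Finset.mem_univ j)

lemma l1_add_le {d : ℕ} (x y : Fin d → ℝ) : l1 (fun j => x j + y j) ≤ l1 x + l1 y := by
  rw [l1, l1, l1, ← Finset.sum_add_distrib]
  exact Finset.sum_le_sum fun j _ => abs_add_le _ _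

lemma abs_add_small_s10 {a b : ℝ} (ha : a ≠ 0) (h : |b| < |a|) :
    |a + b| = |a| + Real.sign a * b := by
  rcases ha.lt_or_gt with hlt | hgt
  · rw [Real.sign_of_neg hlt, abs_of_neg hlt]
    rw [abs_lt, abs_of_neg hlt] at h
    rw [abs_of_neg (by linarith)]
    ring
  · rw [Real.sign_of_pos hgt, abs_of_pos hgt]
    rw [abs_lt, abs_of_pos hgt] at h
    rw [abs_of_pos (by linarith)]
    ring

/-- properties of the unique nonzero solution of the Mixed LASSO
with overcomplete dictionary: all columns have equal `ℓ₁` norm, and at least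
one column has support indexing linearly independent columns of `D`
(hence at most `n` nonzeros). -/
theorem stmt10 {n m d r : ℕ} (hr : 0 < r) (hover : n < d)
    (Y : Matrix (Fin n) (Fin m) ℝ) (D : Matrix (Fin n) (Fin d) ℝ)
    (B : Matrix (Fin m) (Fin r) ℝ) (lam : ℝ) (hlam : 0 < lam)
    (Xs : Matrix (Fin d) (Fin r) ℝ)
    (hmin : ∀ Z : Matrix (Fin d) (Fin r) ℝ,
      (1/2) * frob2 (Y - D * Xs * Bᵀ) + lam * ⨆ i : Fin r, l1 (_root_.col Xs i) ≤
        (1/2) * frob2 (Y - D * Z * Bᵀ) + lam * ⨆ i : Fin r, l1 (_root_.col Z i))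
    (huniq : ∀ Z : Matrix (Fin d) (Fin r) ℝ,
      (1/2) * frob2 (Y - D * Z * Bᵀ) + lam * ⨆ i : Fin r, l1 (_root_.col Z i) =
        (1/2) * frob2 (Y - D * Xs * Bᵀ) + lam * ⨆ i : Fin r, l1 (_root_.col Xs i) → Z = Xs)
    (hne : Xs ≠ 0) :
    (∀ i : Fin r, l1 (_root_.col Xs i) = ⨆ j : Fin r, l1 (_root_.col Xs j)) ∧
    ∃ i : Fin r,
      LinearIndependent ℝ (fun j : {j : Fin d // Xs j i ≠ 0} => Dᵀ (j : Fin d)) ∧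
      l0 (_root_.col Xs i) ≤ n := by
  haveI : Nonempty (Fin r) := ⟨⟨0, hr⟩⟩
  set M : ℝ := ⨆ j : Fin r, l1 (_root_.col Xs j) with hM
  have hbdd : BddAbove (Set.range fun j : Fin r => l1 (_root_.col Xs j)) :=
    (Set.finite_range _).bddAbove
  have hleM : ∀ i : Fin r, l1 (_root_.col Xs i) ≤ M := fun i => le_ciSup hbdd i
  -- key perturbation lemma
  have key : ∀ (i : Fin r) (v : Fin d → ℝ), D *ᵥ v = 0 →
      l1 (fun j => Xs j i + v j) ≤ M → v = 0 := by
    intro i v hDv hl1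
    set Z : Matrix (Fin d) (Fin r) ℝ := Matrix.updateCol Xs i (fun j => Xs j i + v j) with hZ
    have hcol : ∀ k : Fin r, _root_.col Z k =
        if k = i then (fun j => Xs j i + v j) else _root_.col Xs k := by
      intro k
      by_cases hk : k = i
      · subst hk
        funext j
        simp [hZ, _root_.col, Matrix.updateCol_apply]
      · rw [if_neg hk]
        funext j
        simp [hZ, _root_.col, Matrix.updateCol_apply, hk]
    have hmul : D * Z = D * Xs := by
      ext a k
      simp only [Matrix.mul_apply, hZ, Matrix.updateCol_apply]
      by_cases hk : k = i
      · simp only [hk, if_pos rfl]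
        have h0 : ∑ j, D a j * v j = 0 := congrFun hDv a
        calc ∑ j, D a j * (Xs j i + v j)
            = ∑ j, (D a j * Xs j i + D a j * v j) := by
              apply Finset.sum_congr rfl; intro j _; ring
          _ = (∑ j, D a j * Xs j i) + ∑ j, D a j * v j := Finset.sum_add_distrib
          _ = ∑ j, D a j * Xs j i := by rw [h0, add_zero]
      · simp [hk]
    have hsup : (⨆ k : Fin r, l1 (_root_.col Z k)) ≤ M := by
      apply ciSup_le
      intro k
      rw [hcol k]
      by_cases hk : k = i
      · simpa [hk] using hl1
      · simpa [hk] using hleM k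
    have hobj : (1/2) * frob2 (Y - D * Z * Bᵀ) + lam * ⨆ k : Fin r, l1 (_root_.col Z k) =
        (1/2) * frob2 (Y - D * Xs * Bᵀ) + lam * M := by
      have h1 := hmin Z
      have h2 : (1/2) * frob2 (Y - D * Z * Bᵀ) + lam * ⨆ k : Fin r, l1 (_root_.col Z k) ≤
          (1/2) * frob2 (Y - D * Xs * Bᵀ) + lam * M := by
        rw [hmul]
        have := mul_le_mul_of_nonneg_left hsup hlam.le
        linarith
      exact le_antisymm h2 h1
    have hZX : Z = Xs := huniq Z hobj
    funext j
    have h3 := congrFun (congrFun hZX j) i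
    simp [hZ, Matrix.updateCol_apply] at h3
    simpa using h3
  -- kernel vector of D
  obtain ⟨w, hw0, hDw⟩ : ∃ w : Fin d → ℝ, w ≠ 0 ∧ D *ᵥ w = 0 := by
    have hni : ¬ Function.Injective (Matrix.mulVecLin D) := by
      intro h
      have := LinearMap.finrank_le_finrank_of_injective h
      simp [Module.finrank_fin_fun] at this
      omega
    rw [Function.not_injective_iff] at hni
    obtain ⟨x, y, hxy, hne'⟩ := hni
    refine ⟨x - y, sub_ne_zero_of_ne hne', ?_⟩
    have : Matrix.mulVecLin D (x - y) = 0 := by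
      rw [map_sub, hxy, sub_self]
    simpa using this
  -- Part 1
  have part1 : ∀ i : Fin r, l1 (_root_.col Xs i) = M := by
    intro i
    refine le_antisymm (hleM i) ?_
    by_contra hlt
    push_neg at hlt
    have hl1w : 0 < l1 w := by
      obtain ⟨j, hj⟩ := Function.ne_iff.mp hw0
      exact lt_of_lt_of_le (abs_pos.mpr hj) (abs_le_l1 w j)
    set ε : ℝ := (M - l1 (_root_.col Xs i)) / l1 w with hε
    have hεpos : 0 < ε := div_pos (by linarith) hl1w
    have hl1' : l1 (fun j => Xs j i + ε * w j) ≤ M := by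
      have h1 : l1 (fun j => Xs j i + ε * w j) ≤ l1 (_root_.col Xs i) + l1 (fun j => ε * w j) :=
        l1_add_le (_root_.col Xs i) (fun j => ε * w j)
      have h2 : l1 (fun j => ε * w j) = ε * l1 w := by
        rw [l1, l1, Finset.mul_sum]
        exact Finset.sum_congr rfl fun j _ => by
          rw [abs_mul, abs_of_pos hεpos]
      rw [h2, hε, div_mul_cancel₀ _ hl1w.ne'] at h1
      linarith
    have hDεw : D *ᵥ (fun j => ε * w j) = 0 := by
      have : (fun j => ε * w j) = ε • w := by funext j; simp [smul_eq_mul]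
      rw [this, Matrix.mulVec_smul, hDw, smul_zero]
    have := key i (fun j => ε * w j) hDεw hl1'
    obtain ⟨j, hj⟩ := Function.ne_iff.mp hw0
    have := congrFun this j
    simp at this
    rcases this with h | h
    · exact hεpos.ne' h
    · exact hj h
  refine ⟨part1, ?_⟩
  -- Part 2
  set i₀ : Fin r := ⟨0, hr⟩ with hi₀
  have hMpos : 0 < M := by
    have : ∃ j k, Xs j k ≠ 0 := by
      by_contra h
      push_neg at h
      exact hne (by ext j k; simpa using h j k)
    obtain ⟨j, k, hjk⟩ := this
    calc (0:ℝ) < |Xs j k| := abs_pos.mpr hjk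
      _ ≤ l1 (_root_.col Xs k) := abs_le_l1 (_root_.col Xs k) j
      _ ≤ M := hleM k
  have hsupp : ∃ j, Xs j i₀ ≠ 0 := by
    by_contra h
    push_neg at h
    have : l1 (_root_.col Xs i₀) = 0 := by
      rw [l1]
      apply Finset.sum_eq_zero
      intro j _
      simp [_root_.col, h j]
    rw [part1 i₀] at this
    linarith
  obtain ⟨j₀, hj₀⟩ := hsupp
  have hli : LinearIndependent ℝ (fun j : {j : Fin d // Xs j i₀ ≠ 0} => Dᵀ (j : Fin d)) := by
    by_contra hdep
    rw [Fintype.not_linearIndependent_iff] at hdep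
    obtain ⟨g, hg, ⟨j₁, hj₁⟩⟩ := hdep
    set v : Fin d → ℝ := fun j => if h : Xs j i₀ ≠ 0 then g ⟨j, h⟩ else 0 with hv
    have hvj₁ : v (j₁ : Fin d) ≠ 0 := by
      simp only [hv]
      rw [dif_pos j₁.2]
      simpa using hj₁
    have hDv : D *ᵥ v = 0 := by
      funext a
      have h0 := congrFun hg a
      simp only [Finset.sum_apply, Pi.smul_apply, Pi.zero_apply, smul_eq_mul,
        Matrix.transpose_apply] at h0
      have e1 : ∑ j ∈ Finset.univ.filter (fun j => Xs j i₀ ≠ 0), D a j * v j =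
          ∑ j : Fin d, D a j * v j := by
        apply Finset.sum_filter_of_ne
        intro j _ hne'
        intro hx
        apply hne'
        have : v j = 0 := by simp [hv, hx]
        rw [this, mul_zero]
      have e2 : ∑ j ∈ Finset.univ.filter (fun j => Xs j i₀ ≠ 0), D a j * v j =
          ∑ j : {j : Fin d // Xs j i₀ ≠ 0}, D a (j : Fin d) * v (j : Fin d) := by
        apply Finset.sum_subtype
        intro j
        simp
      have e3 : ∀ j : {j : Fin d // Xs j i₀ ≠ 0},
          D a (j : Fin d) * v (j : Fin d) = g j * D a (j : Fin d) := by
        intro j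
        have : v (j : Fin d) = g j := by
          simp only [hv]
          rw [dif_pos j.2]
        rw [this, mul_comm]
      show ∑ j : Fin d, D a j * v j = 0
      rw [← e1, e2, Finset.sum_congr rfl (fun j _ => e3 j)]
      exact h0
    -- size parameters
    set s0 : ℝ := ∑ j, Real.sign (Xs j i₀) * v j with hs0
    set supp : Finset (Fin d) := Finset.univ.filter (fun j => Xs j i₀ ≠ 0) with hsuppdef
    have hsne : supp.Nonempty := ⟨j₀, by simp [hsuppdef, hj₀]⟩
    set m₀ : ℝ := supp.inf' hsne (fun j => |Xs j i₀|) with hm₀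
    have hm₀pos : 0 < m₀ := by
      rw [hm₀, Finset.lt_inf'_iff]
      intro j hj
      rw [hsuppdef, Finset.mem_filter] at hj
      exact abs_pos.mpr hj.2
    have hl1v := l1_nonneg v
    set ε₀ : ℝ := m₀ / (l1 v + 1) with hε₀
    have hε₀pos : 0 < ε₀ := div_pos hm₀pos (by linarith)
    set e : ℝ := if 0 ≤ s0 then -ε₀ else ε₀ with he
    have habs_e : |e| = ε₀ := by
      rw [he]
      split
      · rw [abs_neg, abs_of_pos hε₀pos]
      · rw [abs_of_pos hε₀pos]
    have hene : e ≠ 0 := by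
      intro h
      rw [h, abs_zero] at habs_e
      linarith
    have hes : e * s0 ≤ 0 := by
      rw [he]
      split
      · rename_i h
        have : 0 ≤ ε₀ * s0 := mul_nonneg hε₀pos.le h
        nlinarith
      · rename_i h
        push_neg at h
        nlinarith
    have hsmall : ∀ j, Xs j i₀ ≠ 0 → |e * v j| < |Xs j i₀| := by
      intro j hj
      have h1 : |v j| ≤ l1 v := abs_le_l1 v j
      have h2 : m₀ ≤ |Xs j i₀| :=
        Finset.inf'_le _ (by simp [hsuppdef, hj])
      have h3 : ε₀ * l1 v < m₀ := by
        rw [hε₀, div_mul_eq_mul_div, div_lt_iff₀ (by linarith)]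
        nlinarith
      rw [abs_mul, habs_e]
      have h4 : ε₀ * |v j| ≤ ε₀ * l1 v := mul_le_mul_of_nonneg_left h1 hε₀pos.le
      linarith
    have hptwise : ∀ j : Fin d, |Xs j i₀ + e * v j| =
        |Xs j i₀| + Real.sign (Xs j i₀) * (e * v j) := by
      intro j
      by_cases hj : Xs j i₀ ≠ 0
      · exact abs_add_small_s10 hj (hsmall j hj)
      · push_neg at hj
        have hvj : v j = 0 := by simp [hv, hj]
        simp [hj, hvj]
    have hl1new : l1 (fun j => Xs j i₀ + e * v j) = l1 (_root_.col Xs i₀) + e * s0 := by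
      show ∑ j : Fin d, |Xs j i₀ + e * v j| = (∑ j : Fin d, |Xs j i₀|) + e * s0
      rw [Finset.sum_congr rfl (fun j _ => hptwise j), Finset.sum_add_distrib]
      congr 1
      rw [hs0, Finset.mul_sum]
      apply Finset.sum_congr rfl
      intro j _
      ring
    have hle : l1 (fun j => Xs j i₀ + e * v j) ≤ M := by
      rw [hl1new, part1 i₀]
      linarith
    have hDev : D *ᵥ (fun j => e * v j) = 0 := by
      have : (fun j => e * v j) = e • v := by funext j; simp [smul_eq_mul]
      rw [this, Matrix.mulVec_smul, hDv, smul_zero]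
    have hzero := key i₀ (fun j => e * v j) hDev hle
    have := congrFun hzero (j₁ : Fin d)
    simp only [Pi.zero_apply] at this
    rcases mul_eq_zero.mp this with h | h
    · exact hene h
    · exact hvj₁ h
  refine ⟨i₀, hli, ?_⟩
  have hcard := hli.fintype_card_le_finrank
  rw [Module.finrank_fin_fun, Fintype.card_subtype] at hcard
  rw [l0]
  convert hcard using 2
  rfl
end
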